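/- arXiv:1505.08073 — 4 statements merged into one kernel-verified Lean document; each statement's English description precedes it below -/
import Mathlib

section
/- Let H be a complex Hilbert space, let T > 0 and ε > 0, let {λ_n}_{n∈ℕ} be nonzero real numbers and {k_n}_{n∈ℕ} ⊆ H be such that the sequence of functions t ↦ k_n e^{iλ_n t} is a Riesz sequence in L²(0,T;H). Suppose {α_n} are complex numbers such that the series Σ_n α_n k_n e^{iλ_n t} converges in L²(0,T+ε;H) to a function f which admits a representative that is absolutely continuous on [0,T+ε] with derivative belonging to L²(0,T+ε;H). Then the sequence {λ_n α_n} belongs to ℓ², i.e., α_n = δ_n/λ_n with Σ_n |δ_n|² < ∞. -/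
open MeasureTheory Filter Set Topology Complex

/-!
Shifting time by `h` multiplies the `n`-th coefficient of the series by `e^{i λₙ h} - 1`. For
`0 < h ≤ ε` the shifted partial sums are still controlled on `(0, T)` by the `L²(0, T + ε)`
convergence, so the lower Riesz bound on `(0, T)` gives
`m ∑ₙ |αₙ|² |e^{i λₙ h} - 1|² ≤ 3 ∫₀ᵀ ‖f(t + h) - f(t)‖² dt ≤ 3 h² ‖f'‖²`
(with `f` its absolutely continuous representative), the last step by Cauchy–Schwarz since
`f(t + h) - f(t) = ∫ₜ^{t+h} f'`. Dividing by `h²` and letting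
`h → 0⁺` turns `|e^{i λₙ h} - 1| / h` into `|λₙ|`.
-/

theorem sq_integral_norm_le_measureReal_mul {α E : Type*} [MeasurableSpace α]
    [NormedAddCommGroup E] {μ : Measure α} [IsFiniteMeasure μ] {f : α → E} (hf : MemLp f 2 μ) :
    (∫ x, ‖f x‖ ∂μ) ^ 2 ≤ μ.real univ * ∫ x, ‖f x‖ ^ 2 ∂μ := by
  have holder := integral_mul_norm_le_Lp_mul_Lq (f := fun x => ‖f x‖) (g := fun _ => (1 : ℝ))
    Real.HolderConjugate.two_two (by simpa using hf.norm)
    (by simpa using memLp_const (μ := μ) (1 : ℝ))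
  simp only [norm_norm, norm_one, mul_one, Real.one_rpow, integral_const, smul_eq_mul] at holder
  have hsq : (∫ x, ‖f x‖ ^ (2 : ℝ) ∂μ) = ∫ x, ‖f x‖ ^ 2 ∂μ := by
    simp_rw [Real.rpow_two]
  rw [hsq, ← Real.sqrt_eq_rpow, ← Real.sqrt_eq_rpow, ← Real.sqrt_mul'] at holder
  · calc (∫ x, ‖f x‖ ∂μ) ^ 2 ≤ (√((∫ x, ‖f x‖ ^ 2 ∂μ) * μ.real univ)) ^ 2 :=
          pow_le_pow_left₀ (integral_nonneg fun _ => norm_nonneg _) holder 2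
      _ = _ := by rw [Real.sq_sqrt (by positivity), mul_comm]
  · positivity

theorem sq_norm_intervalIntegral_le {E : Type*} [NormedAddCommGroup E] [NormedSpace ℝ E]
    {g : ℝ → E} {a b : ℝ} (hab : a ≤ b) (hg : MemLp g 2 (volume.restrict (Ioc a b))) :
    ‖∫ s in a..b, g s‖ ^ 2 ≤ (b - a) * ∫ s in a..b, ‖g s‖ ^ 2 := by
  have : IsFiniteMeasure (volume.restrict (Ioc a b)) := ⟨by simp [Real.volume_Ioc]⟩
  rw [intervalIntegral.integral_of_le hab, intervalIntegral.integral_of_le hab]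
  calc ‖∫ s in Ioc a b, g s‖ ^ 2 ≤ (∫ s in Ioc a b, ‖g s‖) ^ 2 :=
        pow_le_pow_left₀ (norm_nonneg _) (norm_integral_le_integral_norm _) 2
    _ ≤ _ := by
        simpa [Real.volume_real_Ioc_of_le hab] using sq_integral_norm_le_measureReal_mul hg

theorem intervalIntegral_le_integral_of_nonneg {φ : ℝ → ℝ} (hφ : Integrable φ) (hφ0 : 0 ≤ φ)
    {a b : ℝ} (hab : a ≤ b) : ∫ s in a..b, φ s ≤ ∫ s, φ s := by
  rw [intervalIntegral.integral_of_le hab]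
  exact setIntegral_le_integral hφ (Eventually.of_forall hφ0)

theorem intervalIntegral_primitive_shift_sub_le {φ : ℝ → ℝ} (hφ : Integrable φ) (hφ0 : 0 ≤ φ)
    {a b h : ℝ} (hab : a ≤ b) (hh : 0 ≤ h) :
    ∫ t in a..b, ((∫ s in 0..t + h, φ s) - ∫ s in 0..t, φ s) ≤ h * ∫ s, φ s := by
  set ψ : ℝ → ℝ := fun x => ∫ s in 0..x, φ s
  have hψ : Continuous ψ := hφ.continuous_primitive 0
  have hψi : ∀ c d, IntervalIntegrable ψ volume c d := hψ.intervalIntegrable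
  have hψi_shift : ∀ x c d, IntervalIntegrable (fun t => ψ (t + x)) volume c d := fun x =>
    (hψ.comp (continuous_add_const x)).intervalIntegrable
  have hψ_sub : ∀ c d, ψ d - ψ c = ∫ s in c..d, φ s := fun c d =>
    intervalIntegral.integral_interval_sub_left hφ.intervalIntegrable hφ.intervalIntegrable
  -- `∫ₐᵇ ψ(t + h) dt - ∫ₐᵇ ψ` telescopes to `∫_b^{b+h} ψ - ∫_a^{a+h} ψ`
  have ends : ∫ t in a..b, (ψ (t + h) - ψ t) = ∫ s in 0..h, (ψ (s + b) - ψ (s + a)) := by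
    rw [intervalIntegral.integral_sub (hψi_shift h a b) (hψi a b),
      intervalIntegral.integral_comp_add_right ψ h,
      intervalIntegral.integral_interval_sub_interval_comm' (hψi _ _) (hψi _ _) (hψi _ _),
      intervalIntegral.integral_sub (hψi_shift b 0 h) (hψi_shift a 0 h),
      intervalIntegral.integral_comp_add_right ψ b, intervalIntegral.integral_comp_add_right ψ a]
    simp only [zero_add, add_comm h]
  calc ∫ t in a..b, (ψ (t + h) - ψ t) = ∫ s in 0..h, (ψ (s + b) - ψ (s + a)) := ends
    _ ≤ ∫ _ in 0..h, ∫ s, φ s := by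
        refine intervalIntegral.integral_mono_on hh ((hψi_shift b 0 h).sub (hψi_shift a 0 h))
          intervalIntegrable_const fun s _ => ?_
        rw [hψ_sub]
        exact intervalIntegral_le_integral_of_nonneg hφ hφ0 (by linarith)
    _ = h * ∫ s, φ s := by simp

theorem integral_sq_norm_intervalIntegral_shift_le {E : Type*} [NormedAddCommGroup E]
    [NormedSpace ℝ E] {g : ℝ → E} (hg : MemLp g 2) {a b h : ℝ} (hab : a ≤ b) (hh : 0 ≤ h) :
    ∫ t in Ioc a b, ‖∫ s in t..t + h, g s‖ ^ 2 ≤ h ^ 2 * ∫ s, ‖g s‖ ^ 2 := by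
  have hφ : Integrable fun s => ‖g s‖ ^ 2 := hg.integrable_norm_pow two_ne_zero
  set ψ : ℝ → ℝ := fun x => ∫ s in 0..x, ‖g s‖ ^ 2
  have hψ : Continuous ψ := hφ.continuous_primitive 0
  have pointwise : ∀ t, ‖∫ s in t..t + h, g s‖ ^ 2 ≤ h * (ψ (t + h) - ψ t) := fun t => by
    rw [intervalIntegral.integral_interval_sub_left hφ.intervalIntegrable hφ.intervalIntegrable]
    simpa using sq_norm_intervalIntegral_le (le_add_of_nonneg_right hh) (hg.restrict _)
  calc ∫ t in Ioc a b, ‖∫ s in t..t + h, g s‖ ^ 2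
      ≤ ∫ t in Ioc a b, h * (ψ (t + h) - ψ t) :=
        integral_mono_of_nonneg (Eventually.of_forall fun _ => by positivity)
          (by fun_prop : Continuous fun t => h * (ψ (t + h) - ψ t)).integrableOn_Ioc
          (Eventually.of_forall pointwise)
    _ = h * ∫ t in a..b, (ψ (t + h) - ψ t) := by
        rw [integral_const_mul, intervalIntegral.integral_of_le hab]
    _ ≤ h * (h * ∫ s, ‖g s‖ ^ 2) :=
        mul_le_mul_of_nonneg_left
          (intervalIntegral_primitive_shift_sub_le hφ (fun _ => by positivity) hab hh) hh
    _ = h ^ 2 * ∫ s, ‖g s‖ ^ 2 := by ring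

theorem exists_continuous_eqOn_integral_sq_norm_shift_le {E : Type*} [NormedAddCommGroup E]
    [NormedSpace ℝ E] {g g' : ℝ → E} {a b : ℝ} (hg' : MemLp g' 2 (volume.restrict (Ioc a b)))
    (hg : ∀ t ∈ Icc a b, g t = g a + ∫ s in a..t, g' s) :
    ∃ (G : ℝ → E) (C : ℝ), Continuous G ∧ EqOn g G (Icc a b) ∧
      ∀ c d h, c ≤ d → 0 ≤ h → ∫ t in Ioc c d, ‖G (t + h) - G t‖ ^ 2 ≤ h ^ 2 * C := by
  have : IsFiniteMeasure (volume.restrict (Ioc a b)) := ⟨by simp [Real.volume_Ioc]⟩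
  set g₀ := (Ioc a b).indicator g'
  have hg₀ : MemLp g₀ 2 := (memLp_indicator_iff_restrict measurableSet_Ioc).mpr hg'
  have hg₀_int : Integrable g₀ :=
    MeasureTheory.IntegrableOn.integrable_indicator (hg'.integrable one_le_two) measurableSet_Ioc
  refine ⟨fun t => g a + ∫ s in a..t, g₀ s, ∫ s, ‖g₀ s‖ ^ 2,
    continuous_const.add (hg₀_int.continuous_primitive a), fun t ht => ?_,
    fun c d h hcd hh => ?_⟩
  · dsimp only
    rw [hg t ht, intervalIntegral.integral_of_le ht.1, intervalIntegral.integral_of_le ht.1]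
    refine congrArg _ (setIntegral_congr_fun measurableSet_Ioc fun s hs => ?_)
    exact (Set.indicator_of_mem (show s ∈ Ioc a b from ⟨hs.1, hs.2.trans ht.2⟩) g').symm
  · simp only [add_sub_add_left_eq_sub, intervalIntegral.integral_interval_sub_left
      hg₀_int.intervalIntegrable hg₀_int.intervalIntegrable]
    exact integral_sq_norm_intervalIntegral_shift_le hg₀ hcd hh

theorem norm_add₃_sq_le {E : Type*} [SeminormedAddCommGroup E] (x y z : E) :
    ‖x + y + z‖ ^ 2 ≤ 3 * (‖x‖ ^ 2 + ‖y‖ ^ 2 + ‖z‖ ^ 2) := by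
  have : ‖x + y + z‖ ^ 2 ≤ (‖x‖ + ‖y‖ + ‖z‖) ^ 2 := by gcongr; exact norm_add₃_le
  nlinarith [sq_nonneg (‖x‖ - ‖y‖), sq_nonneg (‖y‖ - ‖z‖), sq_nonneg (‖x‖ - ‖z‖)]

theorem setIntegral_Ioc_comp_add_right {E : Type*} [NormedAddCommGroup E] [NormedSpace ℝ E]
    (φ : ℝ → E) {a b : ℝ} (hab : a ≤ b) (h : ℝ) :
    ∫ t in Ioc a b, φ (t + h) = ∫ t in Ioc (a + h) (b + h), φ t := by
  rw [← intervalIntegral.integral_of_le hab, ← intervalIntegral.integral_of_le (by linarith),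
    intervalIntegral.integral_comp_add_right]

theorem integral_sq_norm_shift_sub_le {E : Type*} [NormedAddCommGroup E] {u v : ℝ → E}
    (hu : Continuous u) (hv : Continuous v) {a b h : ℝ} (hab : a ≤ b) (hh : 0 ≤ h) :
    ∫ t in Ioc a b, ‖u (t + h) - u t‖ ^ 2 ≤
      6 * (∫ t in Ioc a (b + h), ‖v t - u t‖ ^ 2) + 3 * ∫ t in Ioc a b, ‖v (t + h) - v t‖ ^ 2 := by
  set A : ℝ → ℝ := fun t => ‖v t - u t‖ ^ 2
  set B : ℝ → ℝ := fun t => ‖v (t + h) - v t‖ ^ 2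
  have hA : Continuous A := by fun_prop
  have hAh : Continuous fun t => A (t + h) := by fun_prop
  have hB : Continuous B := by fun_prop
  have pointwise : ∀ t, ‖u (t + h) - u t‖ ^ 2 ≤ 3 * (A (t + h) + A t + B t) := fun t => by
    have split : u (t + h) - u t = (u (t + h) - v (t + h)) + (v t - u t) + (v (t + h) - v t) := by
      abel
    simpa only [split, A, B, norm_sub_rev (u (t + h))] using
      norm_add₃_sq_le (u (t + h) - v (t + h)) (v t - u t) (v (t + h) - v t)
  have mono : ∀ c d, a ≤ c → d ≤ b + h → ∫ t in Ioc c d, A t ≤ ∫ t in Ioc a (b + h), A t :=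
    fun c d hc hd => setIntegral_mono_set hA.integrableOn_Ioc
      (Eventually.of_forall fun _ => by positivity) (Ioc_subset_Ioc hc hd).eventuallyLE
  calc ∫ t in Ioc a b, ‖u (t + h) - u t‖ ^ 2
      ≤ ∫ t in Ioc a b, 3 * (A (t + h) + A t + B t) :=
        integral_mono_of_nonneg (Eventually.of_forall fun _ => by positivity)
          (by fun_prop : Continuous fun t => 3 * (A (t + h) + A t + B t)).integrableOn_Ioc
          (Eventually.of_forall pointwise)
    _ = 3 * ((∫ t in Ioc a b, A (t + h)) + (∫ t in Ioc a b, A t) + ∫ t in Ioc a b, B t) := by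
        rw [integral_const_mul, integral_add (f := fun t => A (t + h) + A t)
          (hAh.integrableOn_Ioc.add hA.integrableOn_Ioc) hB.integrableOn_Ioc,
          integral_add hAh.integrableOn_Ioc hA.integrableOn_Ioc]
    _ ≤ 3 * ((∫ t in Ioc a (b + h), A t) + (∫ t in Ioc a (b + h), A t) + ∫ t in Ioc a b, B t) := by
        rw [setIntegral_Ioc_comp_add_right A hab h]
        have shifted := mono (a + h) (b + h) (by linarith) le_rfl
        have unshifted := mono a b le_rfl (by linarith)
        linarith
    _ = _ := by ring

section ExpSum

variable {ι E : Type*}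

noncomputable def expSum [AddCommGroup E] [Module ℂ E] (s : Finset ι) (α : ι → ℂ)
    (lam : ι → ℝ) (k : ι → E) (t : ℝ) : E :=
  ∑ n ∈ s, α n • (exp (I * lam n * t) • k n)

theorem expSum_add_sub [AddCommGroup E] [Module ℂ E] (s : Finset ι) (α : ι → ℂ) (lam : ι → ℝ)
    (k : ι → E) (t h : ℝ) :
    expSum s α lam k (t + h) - expSum s α lam k t =
      expSum s (fun n => α n * (exp (I * lam n * h) - 1)) lam k t := by
  simp only [expSum, ← Finset.sum_sub_distrib, smul_smul, ← sub_smul]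
  refine Finset.sum_congr rfl fun n _ => ?_
  rw [ofReal_add, mul_add, exp_add]
  ring_nf

@[fun_prop]
theorem continuous_expSum [NormedAddCommGroup E] [NormedSpace ℂ E] (s : Finset ι) (α : ι → ℂ)
    (lam : ι → ℝ) (k : ι → E) : Continuous (expSum s α lam k) := by
  unfold expSum
  fun_prop

end ExpSum

theorem tendsto_norm_cexp_sub_one_div (lam : ℝ) :
    Tendsto (fun h : ℝ => ‖exp (I * lam * h) - 1‖ / h) (𝓝[>] 0) (𝓝 |lam|) := by
  have hderiv : HasDerivAt (fun x : ℝ => exp (I * lam * x)) (I * lam) 0 := by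
    simpa using ((hasDerivAt_id (0 : ℝ)).ofReal_comp.const_mul (I * lam)).cexp
  have slope := hderiv.tendsto_slope_zero_right.norm
  rw [norm_mul, norm_I, one_mul, norm_real, Real.norm_eq_abs] at slope
  refine slope.congr' (eventually_nhdsWithin_of_forall fun h (hh : 0 < h) => ?_)
  rw [norm_smul, zero_add, ofReal_zero, mul_zero, exp_zero, norm_inv, Real.norm_of_nonneg hh.le,
    inv_mul_eq_div]

theorem sum_sq_mul_sq_norm_le_of_norm_cexp_sub_one {ι : Type*} (s : Finset ι) (α : ι → ℂ)
    (lam : ι → ℝ) {K : ℝ}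
    (hK : ∀ᶠ h : ℝ in 𝓝[>] 0, ∑ n ∈ s, ‖α n * (exp (I * lam n * h) - 1)‖ ^ 2 ≤ h ^ 2 * K) :
    ∑ n ∈ s, lam n ^ 2 * ‖α n‖ ^ 2 ≤ K := by
  have quotients : ∀ᶠ h : ℝ in 𝓝[>] (0 : ℝ),
      ∑ n ∈ s, (‖exp (I * lam n * h) - 1‖ / h) ^ 2 * ‖α n‖ ^ 2 ≤ K := by
    filter_upwards [hK, self_mem_nhdsWithin] with h hh (hpos : 0 < h)
    rw [← div_le_iff₀' (by positivity), Finset.sum_div] at hh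
    refine le_of_eq_of_le (Finset.sum_congr rfl fun n _ => ?_) hh
    rw [norm_mul, div_pow]
    ring
  have limit : Tendsto (fun h : ℝ => ∑ n ∈ s, (‖exp (I * lam n * h) - 1‖ / h) ^ 2 * ‖α n‖ ^ 2)
      (𝓝[>] 0) (𝓝 (∑ n ∈ s, |lam n| ^ 2 * ‖α n‖ ^ 2)) :=
    tendsto_finsetSum _ fun n _ => ((tendsto_norm_cexp_sub_one_div (lam n)).pow 2).mul_const _
  simpa only [sq_abs] using le_of_tendsto limit quotients

theorem riesz_sum_sq_norm_mul_cexp_sub_one_le {H : Type*} [NormedAddCommGroup H]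
    [NormedSpace ℂ H] {T ε h m : ℝ} {lam : ℕ → ℝ} {k : ℕ → H} {α : ℕ → ℂ} {f G : ℝ → H}
    (hRiesz : ∀ (s : Finset ℕ) (c : ℕ → ℂ),
      m * ∑ n ∈ s, ‖c n‖ ^ 2 ≤ ∫ t in Ioc 0 T, ‖expSum s c lam k t‖ ^ 2)
    (hconv : Tendsto (fun N => ∫ t in Ioc 0 (T + ε), ‖f t - expSum (Finset.range N) α lam k t‖ ^ 2)
      atTop (𝓝 0))
    (hG : Continuous G) (hfG : f =ᵐ[volume.restrict (Ioc 0 (T + ε))] G)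
    (hm : 0 ≤ m) (hT : 0 ≤ T) (hh : 0 ≤ h) (hhε : h ≤ ε) (N : ℕ) :
    m * ∑ n ∈ Finset.range N, ‖α n * (exp (I * lam n * h) - 1)‖ ^ 2 ≤
      3 * ∫ t in Ioc 0 T, ‖G (t + h) - G t‖ ^ 2 := by
  set P : ℕ → ℝ → H := fun M => expSum (Finset.range M) α lam k
  set err : ℕ → ℝ := fun M => ∫ t in Ioc 0 (T + ε), ‖f t - P M t‖ ^ 2
  set c : ℕ → ℂ := fun n => α n * (exp (I * lam n * h) - 1)
  have bound : ∀ M, m * ∑ n ∈ Finset.range M, ‖c n‖ ^ 2 ≤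
      6 * err M + 3 * ∫ t in Ioc 0 T, ‖G (t + h) - G t‖ ^ 2 := fun M => by
    have err_eq : err M = ∫ t in Ioc 0 (T + ε), ‖G t - P M t‖ ^ 2 :=
      integral_congr_ae (by filter_upwards [hfG] with t ht; rw [ht])
    have window : ∫ t in Ioc 0 (T + h), ‖G t - P M t‖ ^ 2 ≤ err M := err_eq ▸
      setIntegral_mono_set (by fun_prop : Continuous fun t => ‖G t - P M t‖ ^ 2).integrableOn_Ioc
        (Eventually.of_forall fun _ => by positivity)
        (Ioc_subset_Ioc le_rfl (by linarith)).eventuallyLE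
    calc m * ∑ n ∈ Finset.range M, ‖c n‖ ^ 2
        ≤ ∫ t in Ioc 0 T, ‖P M (t + h) - P M t‖ ^ 2 := by
          simpa only [P, expSum_add_sub] using hRiesz (Finset.range M) c
      _ ≤ 6 * (∫ t in Ioc 0 (T + h), ‖G t - P M t‖ ^ 2) +
            3 * ∫ t in Ioc 0 T, ‖G (t + h) - G t‖ ^ 2 :=
          integral_sq_norm_shift_sub_le (continuous_expSum _ _ _ _) hG hT hh
      _ ≤ _ := by linarith
  have limit : Tendsto (fun M => 6 * err M + 3 * ∫ t in Ioc 0 T, ‖G (t + h) - G t‖ ^ 2) atTop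
      (𝓝 (6 * 0 + 3 * ∫ t in Ioc 0 T, ‖G (t + h) - G t‖ ^ 2)) :=
    (hconv.const_mul 6).add tendsto_const_nhds
  rw [mul_zero, zero_add] at limit
  refine ge_of_tendsto limit (eventually_atTop.mpr ⟨N, fun M hNM => le_trans ?_ (bound M)⟩)
  exact mul_le_mul_of_nonneg_left (Finset.sum_le_sum_of_subset_of_nonneg
    (Finset.range_subset_range.mpr hNM) fun _ _ _ => by positivity) hm

theorem stmt2_general {H : Type*} [NormedAddCommGroup H] [InnerProductSpace ℂ H]
    (T ε : ℝ) (hT : 0 < T) (hε : 0 < ε)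
    (lam : ℕ → ℝ) (k : ℕ → H)
    (hRiesz : ∃ m M : ℝ, 0 < m ∧ m ≤ M ∧
      ∀ (s : Finset ℕ) (c : ℕ → ℂ),
        m * ∑ n ∈ s, ‖c n‖ ^ 2 ≤
          (∫ t in Set.Ioc (0:ℝ) T,
            ‖∑ n ∈ s, c n • (Complex.exp (Complex.I * (lam n : ℂ) * (t : ℂ)) • k n)‖ ^ 2) ∧
        (∫ t in Set.Ioc (0:ℝ) T,
            ‖∑ n ∈ s, c n • (Complex.exp (Complex.I * (lam n : ℂ) * (t : ℂ)) • k n)‖ ^ 2) ≤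
          M * ∑ n ∈ s, ‖c n‖ ^ 2)
    (α : ℕ → ℂ) (f : ℝ → H)
    (hconv : Tendsto (fun N => ∫ t in Set.Ioc (0:ℝ) (T + ε),
        ‖f t - ∑ n ∈ Finset.range N,
          α n • (Complex.exp (Complex.I * (lam n : ℂ) * (t : ℂ)) • k n)‖ ^ 2)
      atTop (nhds 0))
    (hreg : ∃ g g' : ℝ → H,
      (∀ᵐ t ∂(volume.restrict (Set.Ioc (0:ℝ) (T + ε))), f t = g t) ∧
      MemLp g' 2 (volume.restrict (Set.Ioc (0:ℝ) (T + ε))) ∧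
      (∀ t ∈ Set.Icc (0:ℝ) (T + ε), g t = g 0 + ∫ s in (0:ℝ)..t, g' s)) :
    Summable (fun n => (lam n) ^ 2 * ‖α n‖ ^ 2) := by
  obtain ⟨m, _, hm, _, hRiesz⟩ := hRiesz
  obtain ⟨g, g', hfg, hg', hgFTC⟩ := hreg
  obtain ⟨G, C, hG, hgG, hGshift⟩ := exists_continuous_eqOn_integral_sq_norm_shift_le hg' hgFTC
  have hfG : f =ᵐ[volume.restrict (Ioc 0 (T + ε))] G := by
    filter_upwards [hfg, ae_restrict_mem measurableSet_Ioc] with t hft ht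
    rw [hft, hgG ⟨ht.1.le, ht.2⟩]
  refine summable_of_sum_range_le (c := 3 * C / m) (fun n => by positivity) fun N =>
    sum_sq_mul_sq_norm_le_of_norm_cexp_sub_one _ α lam ?_
  filter_upwards [Ioo_mem_nhdsGT hε] with h hh
  have riesz := riesz_sum_sq_norm_mul_cexp_sub_one_le (fun s c => (hRiesz s c).1) hconv hG hfG
    hm.le hT.le hh.1.le hh.2.le N
  have shift := hGshift 0 T h hT.le hh.1.le
  rw [mul_div_assoc', le_div_iff₀' hm]
  linarith

/-- If `{k n • e^{i λ n t}}` is a Riesz sequence in `L²(0,T;H)` and the series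
`Σ α n • k n e^{i λ n t}` converges in `L²(0,T+ε;H)` (with `ε > 0`) to a function which has
an absolutely continuous representative with derivative in `L²(0,T+ε;H)`, then
`{λ n * α n} ∈ ℓ²`. -/
theorem stmt2 {H : Type*} [NormedAddCommGroup H] [InnerProductSpace ℂ H] [CompleteSpace H]
    (T ε : ℝ) (hT : 0 < T) (hε : 0 < ε)
    (lam : ℕ → ℝ) (hlam : ∀ n, lam n ≠ 0) (k : ℕ → H)
    (hRiesz : ∃ m M : ℝ, 0 < m ∧ m ≤ M ∧
      ∀ (s : Finset ℕ) (c : ℕ → ℂ),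
        m * ∑ n ∈ s, ‖c n‖ ^ 2 ≤
          (∫ t in Set.Ioc (0:ℝ) T,
            ‖∑ n ∈ s, c n • (Complex.exp (Complex.I * (lam n : ℂ) * (t : ℂ)) • k n)‖ ^ 2) ∧
        (∫ t in Set.Ioc (0:ℝ) T,
            ‖∑ n ∈ s, c n • (Complex.exp (Complex.I * (lam n : ℂ) * (t : ℂ)) • k n)‖ ^ 2) ≤
          M * ∑ n ∈ s, ‖c n‖ ^ 2)
    (α : ℕ → ℂ) (f : ℝ → H)
    (hconv : Tendsto (fun N => ∫ t in Set.Ioc (0:ℝ) (T + ε),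
        ‖f t - ∑ n ∈ Finset.range N,
          α n • (Complex.exp (Complex.I * (lam n : ℂ) * (t : ℂ)) • k n)‖ ^ 2)
      atTop (nhds 0))
    (hreg : ∃ g g' : ℝ → H,
      (∀ᵐ t ∂(volume.restrict (Set.Ioc (0:ℝ) (T + ε))), f t = g t) ∧
      MemLp g' 2 (volume.restrict (Set.Ioc (0:ℝ) (T + ε))) ∧
      (∀ t ∈ Set.Icc (0:ℝ) (T + ε), g t = g 0 + ∫ s in (0:ℝ)..t, g' s)) :
    Summable (fun n => (lam n) ^ 2 * ‖α n‖ ^ 2) :=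
  stmt2_general T ε hT hε lam k hRiesz α f hconv hreg
end

section
/- Let T > 0 and let M : [0,T] → ℝ be continuous. Then there exists a unique continuous function R : [0,T] → ℝ satisfying R(t) + ∫₀ᵗ M(t−s) R(s) ds = M(t) for all t ∈ [0,T]. -/
/-!
The resolvent is the fixed point of `Φ f = M - M * f` on `C([0,T])`. The map `Φ` need not be a
contraction, but it satisfies the Volterra estimate `|Φ f - Φ g|(t) ≤ C ∫₀ᵗ |f - g|`, which
iterates to `|Φⁿ f - Φⁿ g|(t) ≤ (C t)ⁿ / n! ‖f - g‖`. Hence some iterate of `Φ` is a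
contraction, and Banach's fixed point theorem gives existence and uniqueness.
-/

open MeasureTheory Set intervalIntegral Function
open scoped Nat

section VolterraBound

variable {T : ℝ} (hT : 0 ≤ T) {Φ : C(Icc 0 T, ℝ) → C(Icc 0 T, ℝ)} {C : ℝ}

theorem abs_iterate_sub_le_of_volterra_bound (hC : 0 ≤ C)
    (hΦ : ∀ f g (t : Icc 0 T),
      |Φ f t - Φ g t| ≤ C * ∫ s in (0:ℝ)..t, |IccExtend hT f s - IccExtend hT g s|)
    (f g : C(Icc 0 T, ℝ)) (n : ℕ) (t : Icc 0 T) :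
    |Φ^[n] f t - Φ^[n] g t| ≤ (C * t) ^ n / n ! * dist f g := by
  induction n generalizing t with
  | zero => simpa [Real.dist_eq] using ContinuousMap.dist_apply_le_dist (f := f) (g := g) t
  | succ n ih =>
    set F := Φ^[n] f
    set G := Φ^[n] g
    have hF : Continuous (IccExtend hT F) := F.continuous.Icc_extend'
    have hG : Continuous (IccExtend hT G) := G.continuous.Icc_extend'
    have ht : (0:ℝ) ≤ t := t.2.1
    have hbound : ∫ s in (0:ℝ)..t, |IccExtend hT F s - IccExtend hT G s|
        ≤ ∫ s in (0:ℝ)..t, C ^ n / n ! * dist f g * s ^ n := by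
      refine integral_mono_on ht ((hF.sub hG).abs.intervalIntegrable _ _)
        (by apply Continuous.intervalIntegrable; fun_prop) fun s hs => ?_
      have hsT : s ∈ Icc 0 T := ⟨hs.1, hs.2.trans t.2.2⟩
      rw [IccExtend_of_mem _ _ hsT, IccExtend_of_mem _ _ hsT]
      exact (ih ⟨s, hsT⟩).trans_eq (by ring)
    have hint : C * ∫ s in (0:ℝ)..t, C ^ n / n ! * dist f g * s ^ n
        = (C * t) ^ (n + 1) / (n + 1)! * dist f g := by
      rw [intervalIntegral.integral_const_mul, integral_pow, Nat.factorial_succ]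
      push_cast
      field_simp
      ring
    rw [iterate_succ_apply', iterate_succ_apply', ← hint]
    exact (hΦ F G t).trans (mul_le_mul_of_nonneg_left hbound hC)

theorem existsUnique_isFixedPt_of_volterra_bound (hC : 0 ≤ C)
    (hΦ : ∀ f g (t : Icc 0 T),
      |Φ f t - Φ g t| ≤ C * ∫ s in (0:ℝ)..t, |IccExtend hT f s - IccExtend hT g s|) :
    ∃! f, IsFixedPt Φ f := by
  obtain ⟨n, hn⟩ : ∃ n : ℕ, (C * T) ^ n / n ! < 1 :=
    ((FloorSemiring.tendsto_pow_div_factorial_atTop (C * T)).eventually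
      (gt_mem_nhds one_pos)).exists
  have hcontr : ContractingWith ((C * T) ^ n / n !).toNNReal Φ^[n] := by
    refine ⟨Real.toNNReal_lt_one.2 hn, LipschitzWith.of_dist_le_mul fun f g => ?_⟩
    rw [Real.coe_toNNReal _ (by positivity), ContinuousMap.dist_le (by positivity)]
    intro t
    refine (abs_iterate_sub_le_of_volterra_bound hT hC hΦ f g n t).trans ?_
    have ht := t.2
    gcongr
    · exact mul_nonneg hC ht.1
    · exact ht.2
  have hfix := hcontr.isFixedPt_fixedPoint_iterate
  exact ⟨_, hfix, fun g hg => hcontr.fixedPoint_unique' (hg.iterate n) (hfix.iterate n)⟩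

end VolterraBound

section VolterraConv

variable {T : ℝ} (hT : 0 ≤ T)

-- Functions on `[0,T]` are extended to `ℝ` by `IccExtend`; the integrand only samples them on
-- `[0,t] ⊆ [0,T]`, so the extension is invisible (`volterraConv_apply_eq_integral`).
noncomputable def volterraConv (k f : C(Icc 0 T, ℝ)) : C(Icc 0 T, ℝ) where
  toFun t := ∫ s in (0:ℝ)..t, IccExtend hT k (t - s) * IccExtend hT f s
  continuous_toFun := by
    have hk : Continuous (IccExtend hT k) := k.continuous.Icc_extend'
    have hf : Continuous (IccExtend hT f) := f.continuous.Icc_extend'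
    have hconv : Continuous fun x : ℝ =>
        ∫ s in (0:ℝ)..x, IccExtend hT k (x - s) * IccExtend hT f s :=
      continuous_parametric_intervalIntegral_of_continuous
        ((hk.comp (continuous_fst.sub continuous_snd)).mul (hf.comp continuous_snd)) continuous_id
    exact hconv.comp continuous_subtype_val

theorem volterraConv_apply (k f : C(Icc 0 T, ℝ)) (t : Icc 0 T) :
    volterraConv hT k f t = ∫ s in (0:ℝ)..t, IccExtend hT k (t - s) * IccExtend hT f s :=
  rfl

theorem volterraConv_apply_eq_integral {k f : C(Icc 0 T, ℝ)} {K F : ℝ → ℝ}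
    (hK : ∀ x : Icc 0 T, k x = K x) (hF : ∀ x : Icc 0 T, f x = F x) (t : Icc 0 T) :
    volterraConv hT k f t = ∫ s in (0:ℝ)..t, K (t - s) * F s := by
  refine integral_congr fun s hs => ?_
  rw [uIcc_of_le t.2.1] at hs
  have hs' : s ∈ Icc 0 T := ⟨hs.1, hs.2.trans t.2.2⟩
  have hts : (t:ℝ) - s ∈ Icc 0 T := ⟨by linarith [hs.2], by linarith [hs.1, t.2.2]⟩
  simp only [IccExtend_of_mem _ _ hs', IccExtend_of_mem _ _ hts, hK, hF]

theorem abs_volterraConv_sub_le (k f g : C(Icc 0 T, ℝ)) (t : Icc 0 T) :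
    |volterraConv hT k f t - volterraConv hT k g t|
      ≤ ‖k‖ * ∫ s in (0:ℝ)..t, |IccExtend hT f s - IccExtend hT g s| := by
  have hk : Continuous (IccExtend hT k) := k.continuous.Icc_extend'
  have hint : ∀ u : C(Icc 0 T, ℝ), IntervalIntegrable
      (fun s => IccExtend hT k (t - s) * IccExtend hT u s) volume 0 t := fun u =>
    ((hk.comp (continuous_const.sub continuous_id)).mul
      u.continuous.Icc_extend').intervalIntegrable _ _
  rw [← intervalIntegral.integral_const_mul, volterraConv_apply, volterraConv_apply,
    ← integral_sub (hint f) (hint g), ← Real.norm_eq_abs]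
  have hdiff : Continuous fun s => |IccExtend hT f s - IccExtend hT g s| :=
    (f.continuous.Icc_extend'.sub g.continuous.Icc_extend').abs
  refine norm_integral_le_of_norm_le t.2.1 (ae_of_all _ fun s _ => ?_)
    ((hdiff.const_mul ‖k‖).intervalIntegrable _ _)
  rw [← mul_sub, Real.norm_eq_abs, abs_mul]
  exact mul_le_mul_of_nonneg_right (k.norm_coe_le_norm _) (abs_nonneg _)

noncomputable def resolventMap (k : C(Icc 0 T, ℝ)) (f : C(Icc 0 T, ℝ)) : C(Icc 0 T, ℝ) :=
  k - volterraConv hT k f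

theorem existsUnique_isFixedPt_resolventMap (k : C(Icc 0 T, ℝ)) :
    ∃! f, IsFixedPt (resolventMap hT k) f := by
  refine existsUnique_isFixedPt_of_volterra_bound hT (norm_nonneg k) fun f g t => ?_
  simp only [resolventMap, ContinuousMap.sub_apply, sub_sub_sub_cancel_left, abs_sub_comm]
  exact abs_volterraConv_sub_le hT k f g t

theorem isFixedPt_resolventMap_iff {M R : ℝ → ℝ} (hM : ContinuousOn M (Icc 0 T))
    (hR : ContinuousOn R (Icc 0 T)) :
    IsFixedPt (resolventMap hT ⟨(Icc 0 T).domRestrict M, hM.domRestrict⟩)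
        ⟨(Icc 0 T).domRestrict R, hR.domRestrict⟩ ↔
      ∀ t ∈ Icc 0 T, R t + ∫ s in (0:ℝ)..t, M (t - s) * R s = M t := by
  rw [IsFixedPt, ContinuousMap.ext_iff, Subtype.forall]
  refine forall₂_congr fun t ht => ?_
  rw [resolventMap, ContinuousMap.sub_apply,
    volterraConv_apply_eq_integral hT (K := M) (F := R) (fun _ => rfl) (fun _ => rfl)]
  change M t - _ = R t ↔ _
  constructor <;> intro h <;> linarith

end VolterraConv

/-- Existence and uniqueness of the resolvent kernel: for every continuous `M : [0,T] → ℝ`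
there is a unique continuous `R : [0,T] → ℝ` with `R(t) + ∫₀ᵗ M(t-s) R(s) ds = M(t)` on
`[0,T]`. -/
theorem stmt3 (T : ℝ) (hT : 0 < T) (M : ℝ → ℝ) (hM : ContinuousOn M (Set.Icc 0 T)) :
    (∃ R : ℝ → ℝ, ContinuousOn R (Set.Icc 0 T) ∧
      ∀ t ∈ Set.Icc (0:ℝ) T, R t + ∫ s in (0:ℝ)..t, M (t - s) * R s = M t) ∧
    (∀ R₁ R₂ : ℝ → ℝ,
      ContinuousOn R₁ (Set.Icc 0 T) →
      (∀ t ∈ Set.Icc (0:ℝ) T, R₁ t + ∫ s in (0:ℝ)..t, M (t - s) * R₁ s = M t) →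
      ContinuousOn R₂ (Set.Icc 0 T) →
      (∀ t ∈ Set.Icc (0:ℝ) T, R₂ t + ∫ s in (0:ℝ)..t, M (t - s) * R₂ s = M t) →
      Set.EqOn R₁ R₂ (Set.Icc 0 T)) := by
  obtain ⟨f, hf, hf_unique⟩ := existsUnique_isFixedPt_resolventMap hT.le ⟨_, hM.domRestrict⟩
  have hcont : ContinuousOn (IccExtend hT.le f) (Icc 0 T) := f.continuous.Icc_extend'.continuousOn
  refine ⟨⟨IccExtend hT.le f, hcont, ?_⟩, ?_⟩
  · have hrestrict : (⟨(Icc 0 T).domRestrict (IccExtend hT.le f),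
        hcont.domRestrict⟩ : C(Icc 0 T, ℝ)) = f :=
      ContinuousMap.ext (IccExtend_val hT.le f)
    rw [← isFixedPt_resolventMap_iff hT.le hM hcont, hrestrict]
    exact hf
  · intro R₁ R₂ hR₁ hR₁_eq hR₂ hR₂_eq t ht
    have h₁ := hf_unique _ ((isFixedPt_resolventMap_iff hT.le hM hR₁).2 hR₁_eq)
    have h₂ := hf_unique _ ((isFixedPt_resolventMap_iff hT.le hM hR₂).2 hR₂_eq)
    exact congr($(h₁.trans h₂.symm) ⟨t, ht⟩)
end

section
/- Let T > 0, λ₁ > 0, b ∈ ℝ and let K : [0,T] → ℝ be continuous. There exists a constant C = C(T, λ₁, b, K) such that for every λ ≥ λ₁, every α, β ∈ ℝ, and every continuous Z : [0,T] → ℝ satisfying Z(t) = α cos(λt) + β sin(λt) + (b/λ) ∫₀ᵗ sin(λ(t−s)) Z(s) ds + (1/λ) ∫₀ᵗ sin(λ(t−s)) (∫₀ˢ K(s−r) Z(r) dr) ds for all t ∈ [0,T], one has sup_{t∈[0,T]} |Z(t)| ≤ C (|α| + |β|). -/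
/-!
Bounding `K` by a constant `M` on `[0, T]` and `sin` by `1`, every solution satisfies
`|Z t| ≤ |α| + |β| + L ∫₀ᵗ |Z|` with `L = |b| / λ₁ * (1 + M T² / λ₁)`, which is uniform in
`λ ≥ λ₁`. Grönwall's inequality then gives `|Z t| ≤ (|α| + |β|) exp (L T)`.
-/

open MeasureTheory Set Real intervalIntegral

theorem add_mul_gronwallBound_zero (A L x : ℝ) :
    A + L * gronwallBound 0 L A x = A * exp (L * x) := by
  rcases eq_or_ne L 0 with rfl | hL
  · simp
  · rw [gronwallBound_of_K_ne_0 hL]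
    field_simp
    ring

theorem le_mul_exp_of_le_add_mul_integral {v : ℝ → ℝ} {a b A L : ℝ}
    (hv : ContinuousOn v (Icc a b)) (hL : 0 ≤ L)
    (h : ∀ t ∈ Icc a b, v t ≤ A + L * ∫ s in a..t, v s) :
    ∀ t ∈ Icc a b, v t ≤ A * exp (L * (t - a)) := by
  intro t ht
  have hab : a ≤ b := ht.1.trans ht.2
  -- Grönwall for the primitive `∫ₐᵗ v`, after extending `v` continuously to `ℝ`.
  set w : ℝ → ℝ := fun x => v (projIcc a b hab x)
  have hw : Continuous w :=
    hv.comp_continuous (continuous_subtype_val.comp continuous_projIcc) fun x =>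
      (projIcc a b hab x).2
  have hvw : ∀ x ∈ Icc a b, ∫ s in a..x, w s = ∫ s in a..x, v s := fun x hx =>
    integral_congr fun s hs => by
      rw [uIcc_of_le hx.1] at hs
      simp only [w, projIcc_of_mem hab ⟨hs.1, hs.2.trans hx.2⟩]
  have hderiv : ∀ x, HasDerivAt (fun u => ∫ s in a..u, w s) (w x) x := fun x =>
    (hw.integral_hasStrictDerivAt a x).hasDerivAt
  have hgronwall := le_gronwallBound_of_liminf_deriv_right_le (δ := 0) (K := L) (ε := A)
    (fun x _ => (hderiv x).continuousAt.continuousWithinAt)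
    (fun x _ r hr => (hderiv x).hasDerivWithinAt.liminf_right_slope_le hr) (by simp)
    (fun x hx => by
      have hx' : x ∈ Icc a b := Ico_subset_Icc_self hx
      simp only [w, projIcc_of_mem hab hx', hvw x hx']
      linarith [h x hx'])
    t ht
  calc v t ≤ A + L * ∫ s in a..t, w s := by rw [hvw t ht]; exact h t ht
    _ ≤ A + L * gronwallBound 0 L A (t - a) := by gcongr
    _ = A * exp (L * (t - a)) := add_mul_gronwallBound_zero A L _

theorem abs_mul_cos_add_mul_sin_le (α β x : ℝ) : |α * cos x + β * sin x| ≤ |α| + |β| :=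
  calc |α * cos x + β * sin x| ≤ |α| * |cos x| + |β| * |sin x| := by
        simpa only [abs_mul] using abs_add_le (α * cos x) (β * sin x)
    _ ≤ |α| * 1 + |β| * 1 := by gcongr <;> simp [abs_cos_le_one, abs_sin_le_one]
    _ = |α| + |β| := by ring

section Memory

variable {K Z : ℝ → ℝ} {T M : ℝ}

theorem abs_integral_kernel_mul_le (hKM : ∀ x ∈ Icc 0 T, |K x| ≤ M)
    (hZ : ContinuousOn Z (Icc 0 T)) {s t : ℝ} (hs : 0 ≤ s) (hst : s ≤ t) (ht : t ≤ T) :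
    |∫ r in (0:ℝ)..s, K (s - r) * Z r| ≤ M * ∫ r in (0:ℝ)..t, |Z r| := by
  have hZ_on : ∀ {u}, 0 ≤ u → u ≤ T → IntervalIntegrable (fun r => |Z r|) volume 0 u :=
    fun hu huT => (hZ.abs.mono (Icc_subset_Icc_right huT)).intervalIntegrable_of_Icc hu
  have hM : 0 ≤ M := (abs_nonneg _).trans (hKM 0 ⟨le_rfl, hs.trans (hst.trans ht)⟩)
  calc |∫ r in (0:ℝ)..s, K (s - r) * Z r| ≤ ∫ r in (0:ℝ)..s, M * |Z r| := by
        rw [← Real.norm_eq_abs]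
        refine norm_integral_le_of_norm_le hs (ae_of_all _ fun r hr => ?_)
          ((hZ_on hs (hst.trans ht)).const_mul M)
        rw [Real.norm_eq_abs, abs_mul]
        gcongr
        exact hKM _ ⟨by linarith [hr.2], by linarith [hr.1]⟩
    _ = M * ∫ r in (0:ℝ)..s, |Z r| := integral_const_mul M _
    _ ≤ M * ∫ r in (0:ℝ)..t, |Z r| := by
        gcongr
        exact integral_mono_interval le_rfl hs hst (ae_of_all _ fun _ => abs_nonneg _)
          (hZ_on (hs.trans hst) ht)

theorem abs_integral_sin_mul_integral_kernel_mul_le (hKM : ∀ x ∈ Icc 0 T, |K x| ≤ M)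
    (hZ : ContinuousOn Z (Icc 0 T)) (lam : ℝ) {t : ℝ} (ht : t ∈ Icc 0 T) :
    |∫ s in (0:ℝ)..t, sin (lam * (t - s)) * ∫ r in (0:ℝ)..s, K (s - r) * Z r|
      ≤ M * (∫ r in (0:ℝ)..t, |Z r|) * t := by
  have hbound := norm_integral_le_of_norm_le_const (a := 0) (b := t)
    (f := fun s => sin (lam * (t - s)) * ∫ r in (0:ℝ)..s, K (s - r) * Z r)
    (C := M * ∫ r in (0:ℝ)..t, |Z r|) fun s hs => by
      rw [uIoc_of_le ht.1] at hs
      rw [Real.norm_eq_abs, abs_mul]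
      calc |sin (lam * (t - s))| * |∫ r in (0:ℝ)..s, K (s - r) * Z r|
          ≤ 1 * (M * ∫ r in (0:ℝ)..t, |Z r|) := by
            gcongr
            · exact abs_sin_le_one _
            · exact abs_integral_kernel_mul_le hKM hZ hs.1.le hs.2 ht.2
        _ = M * ∫ r in (0:ℝ)..t, |Z r| := one_mul _
  rwa [sub_zero, abs_of_nonneg ht.1] at hbound

theorem abs_le_add_mul_integral_abs_of_eq (hKM : ∀ x ∈ Icc 0 T, |K x| ≤ M)
    (hZ : ContinuousOn Z (Icc 0 T)) {lam α β b t : ℝ} (hlam : 0 < lam) (ht : t ∈ Icc 0 T)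
    (heq : Z t = α * cos (lam * t) + β * sin (lam * t) + (b / lam) *
      ∫ s in (0:ℝ)..t, (sin (lam * (t - s)) * Z s + (1 / lam) *
        ∫ s in (0:ℝ)..t, sin (lam * (t - s)) * ∫ r in (0:ℝ)..s, K (s - r) * Z r)) :
    |Z t| ≤ |α| + |β| + |b| / lam * (1 + M * t ^ 2 / lam) * ∫ s in (0:ℝ)..t, |Z s| := by
  set J := ∫ s in (0:ℝ)..t, sin (lam * (t - s)) * ∫ r in (0:ℝ)..s, K (s - r) * Z r
  set I := ∫ s in (0:ℝ)..t, |Z s|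
  have hJ : |J| ≤ M * I * t := abs_integral_sin_mul_integral_kernel_mul_le hKM hZ lam ht
  have hZt : IntervalIntegrable (fun s => |Z s|) volume 0 t :=
    (hZ.abs.mono (Icc_subset_Icc_right ht.2)).intervalIntegrable_of_Icc ht.1
  have houter : |∫ s in (0:ℝ)..t, (sin (lam * (t - s)) * Z s + (1 / lam) * J)|
      ≤ (1 + M * t ^ 2 / lam) * I := by
    rw [← Real.norm_eq_abs]
    have hconst : IntervalIntegrable (fun _ => 1 / lam * (M * I * t)) volume 0 t :=
      intervalIntegrable_const
    refine (intervalIntegral.norm_integral_le_of_norm_le ht.1 (ae_of_all _ fun s _ => ?_)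
      (hZt.add hconst)).trans_eq ?_
    · calc ‖sin (lam * (t - s)) * Z s + 1 / lam * J‖
          ≤ |sin (lam * (t - s))| * |Z s| + 1 / lam * |J| :=
            (abs_add_le _ _).trans_eq (by rw [abs_mul, abs_mul, abs_of_pos (one_div_pos.2 hlam)])
        _ ≤ 1 * |Z s| + 1 / lam * (M * I * t) := by gcongr; exact abs_sin_le_one _
        _ = |Z s| + 1 / lam * (M * I * t) := by rw [one_mul]
    · rw [integral_add hZt hconst, intervalIntegral.integral_const, smul_eq_mul]
      field_simp
      ring
  rw [heq]
  calc |α * cos (lam * t) + β * sin (lam * t) + (b / lam) *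
        ∫ s in (0:ℝ)..t, (sin (lam * (t - s)) * Z s + (1 / lam) * J)|
      ≤ |α * cos (lam * t) + β * sin (lam * t)| + |b| / lam *
        |∫ s in (0:ℝ)..t, (sin (lam * (t - s)) * Z s + (1 / lam) * J)| :=
        (abs_add_le _ _).trans_eq (by rw [abs_mul, abs_div, abs_of_pos hlam])
    _ ≤ |α| + |β| + |b| / lam * ((1 + M * t ^ 2 / lam) * I) := by
        gcongr
        exact abs_mul_cos_add_mul_sin_le α β _
    _ = |α| + |β| + |b| / lam * (1 + M * t ^ 2 / lam) * I := by ring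

end Memory

theorem stmt12_general (T lam₁ b : ℝ) (hlam₁ : 0 < lam₁)
    (K : ℝ → ℝ) (hK : ContinuousOn K (Set.Icc 0 T)) :
    ∃ C : ℝ, ∀ lam : ℝ, lam₁ ≤ lam → ∀ α β : ℝ, ∀ Z : ℝ → ℝ,
      ContinuousOn Z (Set.Icc 0 T) →
      (∀ t ∈ Set.Icc (0:ℝ) T,
        Z t = α * Real.cos (lam * t) + β * Real.sin (lam * t)
          + (b / lam) * ∫ s in (0:ℝ)..t, Real.sin (lam * (t - s)) * Z s
          + (1 / lam) * ∫ s in (0:ℝ)..t, Real.sin (lam * (t - s)) *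
              (∫ r in (0:ℝ)..s, K (s - r) * Z r)) →
      ∀ t ∈ Set.Icc (0:ℝ) T, |Z t| ≤ C * (|α| + |β|) := by
  obtain ⟨M, hKM⟩ := isCompact_Icc.exists_bound_of_continuousOn hK
  set L := |b| / lam₁ * (1 + M * T ^ 2 / lam₁) with hL
  refine ⟨exp (L * T), fun lam hlam α β Z hZ hEq t ht => ?_⟩
  have hM : 0 ≤ M := (norm_nonneg _).trans (hKM 0 ⟨le_rfl, ht.1.trans ht.2⟩)
  have hlam0 : 0 < lam := hlam₁.trans_le hlam
  have hintegral : ∀ s ∈ Icc 0 T, |Z s| ≤ |α| + |β| + L * ∫ r in (0:ℝ)..s, |Z r| := by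
    intro s hs
    refine (abs_le_add_mul_integral_abs_of_eq hKM hZ hlam0 hs (hEq s hs)).trans ?_
    have : 0 ≤ ∫ r in (0:ℝ)..s, |Z r| := integral_nonneg hs.1 fun _ _ => abs_nonneg _
    have : s ^ 2 ≤ T ^ 2 := by gcongr; exacts [hs.1, hs.2]
    rw [hL]
    gcongr
  calc |Z t| ≤ (|α| + |β|) * exp (L * (t - 0)) :=
        le_mul_exp_of_le_add_mul_integral hZ.abs (by positivity) hintegral t ht
    _ ≤ exp (L * T) * (|α| + |β|) := by
        rw [mul_comm, sub_zero]
        gcongr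
        exact ht.2

/-- Gronwall-type uniform estimate for the modal integral equation: there is a constant
`C = C(T, λ₁, b, K)` such that every continuous solution of
`Z(t) = α cos(λt) + β sin(λt) + (b/λ) ∫₀ᵗ sin(λ(t-s)) Z(s) ds
  + (1/λ) ∫₀ᵗ sin(λ(t-s)) (∫₀ˢ K(s-r) Z(r) dr) ds`
with `λ ≥ λ₁` satisfies `sup_{[0,T]} |Z| ≤ C (|α| + |β|)`. -/
theorem stmt12 (T lam₁ b : ℝ) (hT : 0 < T) (hlam₁ : 0 < lam₁)
    (K : ℝ → ℝ) (hK : ContinuousOn K (Set.Icc 0 T)) :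
    ∃ C : ℝ, ∀ lam : ℝ, lam₁ ≤ lam → ∀ α β : ℝ, ∀ Z : ℝ → ℝ,
      ContinuousOn Z (Set.Icc 0 T) →
      (∀ t ∈ Set.Icc (0:ℝ) T,
        Z t = α * Real.cos (lam * t) + β * Real.sin (lam * t)
          + (b / lam) * ∫ s in (0:ℝ)..t, Real.sin (lam * (t - s)) * Z s
          + (1 / lam) * ∫ s in (0:ℝ)..t, Real.sin (lam * (t - s)) *
              (∫ r in (0:ℝ)..s, K (s - r) * Z r)) →
      ∀ t ∈ Set.Icc (0:ℝ) T, |Z t| ≤ C * (|α| + |β|) :=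
  stmt12_general T lam₁ b hlam₁ K hK
end

section
/- Let X be a Banach space, T > 0, b ∈ ℝ, and let K : [0,T] → ℝ be continuous. Let N ≥ 1, let v₁, …, v_N ∈ X, let 0 < λ₁ ≤ λ₂ ≤ … ≤ λ_N be positive reals, and let a₁, …, a_N, c₁, …, c_N ∈ ℝ. For each n let Z_n : [0,T] → ℝ be the (twice continuously differentiable) solution of Z_n″(t) = −λ_n² Z_n(t) + b Z_n(t) + ∫₀ᵗ K(t−s) Z_n(s) ds with Z_n(0) = a_n, Z_n′(0) = c_n. If Σ_{n=1}^{N} Z_n(t) v_n = 0 for all t ∈ [0,T], then for every μ > 0 and every t ∈ [0,T] one has Σ_{n : λ_n = μ} Z_n(t) v_n = 0; in particular, for every μ > 0, Σ_{n : λ_n = μ} a_n v_n = 0 and Σ_{n : λ_n = μ} c_n v_n = 0. -/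
/-!
Differentiating `∑ Z_n(t) w_n ≡ 0` twice and inserting the equation, the `b`-term and the memory
term are applied to the vanishing combination itself and drop out, leaving
`∑ λ_n² Z_n(t) w_n ≡ 0`. Iterating, every power sum `∑ (λ_n²)^k Z_n(t) w_n` vanishes, and a
Lagrange basis polynomial in `λ²` then isolates the indices with `λ_n = μ`. The vector-valued
statement is reduced to scalar weights `w_n = φ (v_n)` through continuous linear functionals `φ`,
because `X` need not be complete, so integrals cannot be taken in `X` itself.
-/

open Finset Polynomial

theorem Finset.sum_eval_mul_eq_zero_of_forall_sum_pow_mul_eq_zero {ι F : Type*} [Field F]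
    {s : Finset ι} {x w : ι → F} (h : ∀ k : ℕ, ∑ n ∈ s, x n ^ k * w n = 0) (p : F[X]) :
    ∑ n ∈ s, p.eval (x n) * w n = 0 := by
  induction p using Polynomial.induction_on' with
  | add p q hp hq => simp only [eval_add, add_mul, sum_add_distrib, hp, hq, add_zero]
  | monomial k a => simp only [eval_monomial, mul_assoc, ← mul_sum, h k, mul_zero]

theorem Finset.sum_filter_eq_zero_of_forall_sum_pow_mul_eq_zero {ι F : Type*} [Field F]
    [DecidableEq F] {s : Finset ι} {x w : ι → F} (h : ∀ k : ℕ, ∑ n ∈ s, x n ^ k * w n = 0)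
    (y : F) : ∑ n ∈ s with x n = y, w n = 0 := by
  by_cases hy : y ∈ s.image x
  · rw [← s.sum_eval_mul_eq_zero_of_forall_sum_pow_mul_eq_zero h
      (Lagrange.basis (s.image x) id y), sum_filter]
    refine sum_congr rfl fun n hn => ?_
    split_ifs with hxn
    · have hbasis : (Lagrange.basis (s.image x) id y).eval y = 1 :=
        Lagrange.eval_basis_self (Set.injOn_id _) hy
      rw [hxn, hbasis, one_mul]
    · rw [← id_eq (x n), Lagrange.eval_basis_of_ne (Ne.symm hxn) (mem_image_of_mem x hn), zero_mul]
  · exact sum_eq_zero fun n hn => absurd (mem_image_of_mem x (mem_filter.1 hn).1)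
      ((mem_filter.1 hn).2 ▸ hy)

theorem UniqueDiffOn.hasDerivWithinAt_eq_zero {X : Type*} [NormedAddCommGroup X] [NormedSpace ℝ X]
    {s : Set ℝ} (hs : UniqueDiffOn ℝ s) {f : ℝ → X} {f' : X} {t : ℝ} (ht : t ∈ s)
    (hf : HasDerivWithinAt f f' s t) (h0 : Set.EqOn f 0 s) : f' = 0 :=
  (hs t ht).eq_deriv s hf ((hasDerivWithinAt_const t s 0).congr h0 (h0 ht))

open Set

theorem sum_intervalIntegral_mul_eq_zero {ι : Type*} [Fintype ι] {k : ℝ → ℝ} {f : ι → ℝ → ℝ}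
    {w : ι → ℝ} {a b : ℝ} (hk : ContinuousOn k (uIcc a b))
    (hf : ∀ n, ContinuousOn (f n) (uIcc a b)) (h0 : ∀ s ∈ uIcc a b, ∑ n, f n s * w n = 0) :
    ∑ n, (∫ s in a..b, k s * f n s) * w n = 0 :=
  calc ∑ n, (∫ s in a..b, k s * f n s) * w n = ∫ s in a..b, k s * ∑ n, f n s * w n := by
        simp_rw [← intervalIntegral.integral_mul_const, mul_sum, ← mul_assoc]
        exact (intervalIntegral.integral_finsetSum fun n _ =>
          ((hk.mul (hf n)).mul continuousOn_const).intervalIntegrable).symm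
    _ = 0 := by
        rw [intervalIntegral.integral_congr (g := 0) fun s hs => by simp [h0 s hs]]
        simp

section MemoryEquation

variable {ι : Type*} [Fintype ι] {T b : ℝ} {K : ℝ → ℝ} {lam : ι → ℝ} {Z Z' Z'' : ι → ℝ → ℝ}

theorem sum_sq_mul_eq_zero_of_sum_mul_eq_zero (hT : 0 < T) (hK : ContinuousOn K (Icc 0 T))
    (hZ : ∀ n, ∀ t ∈ Icc (0:ℝ) T, HasDerivWithinAt (Z n) (Z' n t) (Icc 0 T) t)
    (hZ' : ∀ n, ∀ t ∈ Icc (0:ℝ) T, HasDerivWithinAt (Z' n) (Z'' n t) (Icc 0 T) t)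
    (hode : ∀ n, ∀ t ∈ Icc (0:ℝ) T,
      Z'' n t = -(lam n) ^ 2 * Z n t + b * Z n t + ∫ s in (0:ℝ)..t, K (t - s) * Z n s)
    {w : ι → ℝ} (h0 : ∀ t ∈ Icc (0:ℝ) T, ∑ n, Z n t * w n = 0) :
    ∀ t ∈ Icc (0:ℝ) T, ∑ n, lam n ^ 2 * Z n t * w n = 0 := by
  have hIcc := uniqueDiffOn_Icc hT
  have h1 : ∀ t ∈ Icc (0:ℝ) T, ∑ n, Z' n t * w n = 0 := fun t ht =>
    hIcc.hasDerivWithinAt_eq_zero ht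
      (HasDerivWithinAt.fun_sum fun n _ => (hZ n t ht).mul_const (w n)) h0
  have h2 : ∀ t ∈ Icc (0:ℝ) T, ∑ n, Z'' n t * w n = 0 := fun t ht =>
    hIcc.hasDerivWithinAt_eq_zero ht
      (HasDerivWithinAt.fun_sum fun n _ => (hZ' n t ht).mul_const (w n)) h1
  intro t ht
  have hsub : uIcc 0 t ⊆ Icc 0 T := by
    rw [uIcc_of_le ht.1]
    exact Icc_subset_Icc le_rfl ht.2
  have hkernel : ContinuousOn (fun s => K (t - s)) (uIcc 0 t) :=
    hK.comp (continuousOn_const.sub continuousOn_id) fun s hs => by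
      rw [uIcc_of_le ht.1] at hs
      exact ⟨by linarith [hs.2], by linarith [hs.1, ht.2]⟩
  have hmemory : ∑ n, (∫ s in (0:ℝ)..t, K (t - s) * Z n s) * w n = 0 :=
    sum_intervalIntegral_mul_eq_zero hkernel
      (fun n s hs => (hZ n s (hsub hs)).continuousWithinAt.mono hsub) fun s hs => h0 s (hsub hs)
  calc ∑ n, lam n ^ 2 * Z n t * w n
      = b * ∑ n, Z n t * w n + ∑ n, (∫ s in (0:ℝ)..t, K (t - s) * Z n s) * w n
        - ∑ n, Z'' n t * w n := by
        rw [mul_sum, ← sum_add_distrib, ← sum_sub_distrib]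
        exact sum_congr rfl fun n _ => by rw [hode n t ht]; ring
    _ = 0 := by rw [h0 t ht, hmemory, h2 t ht]; ring

theorem sum_pow_sq_mul_eq_zero_of_sum_mul_eq_zero (hT : 0 < T) (hK : ContinuousOn K (Icc 0 T))
    (hZ : ∀ n, ∀ t ∈ Icc (0:ℝ) T, HasDerivWithinAt (Z n) (Z' n t) (Icc 0 T) t)
    (hZ' : ∀ n, ∀ t ∈ Icc (0:ℝ) T, HasDerivWithinAt (Z' n) (Z'' n t) (Icc 0 T) t)
    (hode : ∀ n, ∀ t ∈ Icc (0:ℝ) T,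
      Z'' n t = -(lam n) ^ 2 * Z n t + b * Z n t + ∫ s in (0:ℝ)..t, K (t - s) * Z n s)
    {w : ι → ℝ} (h0 : ∀ t ∈ Icc (0:ℝ) T, ∑ n, Z n t * w n = 0) (k : ℕ) :
    ∀ t ∈ Icc (0:ℝ) T, ∑ n, (lam n ^ 2) ^ k * (Z n t * w n) = 0 := by
  induction k with
  | zero => simpa using h0
  | succ k ih =>
    have hstep := sum_sq_mul_eq_zero_of_sum_mul_eq_zero hT hK hZ hZ' hode
      (w := fun n => (lam n ^ 2) ^ k * w n) fun t ht => by
        rw [← ih t ht]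
        exact sum_congr rfl fun n _ => by ring
    intro t ht
    rw [← hstep t ht]
    exact sum_congr rfl fun n _ => by ring

theorem sum_filter_mul_eq_zero_of_sum_mul_eq_zero (hT : 0 < T) (hK : ContinuousOn K (Icc 0 T))
    (hZ : ∀ n, ∀ t ∈ Icc (0:ℝ) T, HasDerivWithinAt (Z n) (Z' n t) (Icc 0 T) t)
    (hZ' : ∀ n, ∀ t ∈ Icc (0:ℝ) T, HasDerivWithinAt (Z' n) (Z'' n t) (Icc 0 T) t)
    (hode : ∀ n, ∀ t ∈ Icc (0:ℝ) T,
      Z'' n t = -(lam n) ^ 2 * Z n t + b * Z n t + ∫ s in (0:ℝ)..t, K (t - s) * Z n s)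
    (hpos : ∀ n, 0 < lam n) {w : ι → ℝ} (h0 : ∀ t ∈ Icc (0:ℝ) T, ∑ n, Z n t * w n = 0)
    {μ : ℝ} (hμ : 0 < μ) :
    ∀ t ∈ Icc (0:ℝ) T, ∑ n with lam n = μ, Z n t * w n = 0 := fun t ht => by
  have hsq := univ.sum_filter_eq_zero_of_forall_sum_pow_mul_eq_zero (x := fun n => lam n ^ 2)
    (fun k => sum_pow_sq_mul_eq_zero_of_sum_mul_eq_zero hT hK hZ hZ' hode h0 k t ht) (μ ^ 2)
  simpa only [sq_eq_sq₀ (hpos _).le hμ.le] using hsq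

end MemoryEquation

theorem stmt14_general {X : Type*} [NormedAddCommGroup X] [NormedSpace ℝ X]
    (T : ℝ) (hT : 0 < T) (b : ℝ) (K : ℝ → ℝ) (hK : ContinuousOn K (Set.Icc 0 T))
    (N : ℕ) (v : Fin N → X) (lam : Fin N → ℝ)
    (hpos : ∀ n, 0 < lam n)
    (a c : Fin N → ℝ) (Z Z' Z'' : Fin N → ℝ → ℝ)
    (hZ : ∀ n, ∀ t ∈ Set.Icc (0:ℝ) T, HasDerivWithinAt (Z n) (Z' n t) (Set.Icc 0 T) t)
    (hZ' : ∀ n, ∀ t ∈ Set.Icc (0:ℝ) T, HasDerivWithinAt (Z' n) (Z'' n t) (Set.Icc 0 T) t)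
    (hode : ∀ n, ∀ t ∈ Set.Icc (0:ℝ) T,
      Z'' n t = -(lam n) ^ 2 * Z n t + b * Z n t + ∫ s in (0:ℝ)..t, K (t - s) * Z n s)
    (hZ0 : ∀ n, Z n 0 = a n) (hZ'0 : ∀ n, Z' n 0 = c n)
    (hsum : ∀ t ∈ Set.Icc (0:ℝ) T, ∑ n, Z n t • v n = 0) :
    ∀ μ : ℝ, 0 < μ →
      (∀ t ∈ Set.Icc (0:ℝ) T,
        ∑ n ∈ Finset.univ.filter (fun n => lam n = μ), Z n t • v n = 0) ∧
      (∑ n ∈ Finset.univ.filter (fun n => lam n = μ), a n • v n = 0) ∧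
      (∑ n ∈ Finset.univ.filter (fun n => lam n = μ), c n • v n = 0) := by
  intro μ hμ
  have hfiber : ∀ t ∈ Icc (0:ℝ) T, ∑ n with lam n = μ, Z n t • v n = 0 := fun t ht =>
    SeparatingDual.eq_zero_of_forall_dual_eq_zero (R := ℝ) fun φ => by
      rw [map_sum]
      simpa using sum_filter_mul_eq_zero_of_sum_mul_eq_zero hT hK hZ hZ' hode hpos
        (w := fun n => φ (v n)) (fun t ht => by simpa [map_sum] using congrArg φ (hsum t ht))
        hμ t ht
  have h0T : (0:ℝ) ∈ Icc 0 T := ⟨le_rfl, hT.le⟩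
  refine ⟨hfiber, ?_, ?_⟩
  · simpa only [hZ0] using hfiber 0 h0T
  · simpa only [hZ'0] using (uniqueDiffOn_Icc hT).hasDerivWithinAt_eq_zero h0T
      (HasDerivWithinAt.fun_sum fun n _ => (hZ n 0 h0T).smul_const (v n)) hfiber

/-- If a finite combination `Σ Z_n(t) v_n` of modal solutions of the memory equation
`Z_n'' = -λ_n² Z_n + b Z_n + K * Z_n` vanishes identically on `[0,T]`, then for every
frequency `μ > 0` the partial combination over the indices with `λ_n = μ` also vanishes
identically; in particular the combinations of the initial data vanish:
`Σ_{λ_n = μ} a_n v_n = 0` and `Σ_{λ_n = μ} c_n v_n = 0`. -/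
theorem stmt14 {X : Type*} [NormedAddCommGroup X] [NormedSpace ℝ X]
    (T : ℝ) (hT : 0 < T) (b : ℝ) (K : ℝ → ℝ) (hK : ContinuousOn K (Set.Icc 0 T))
    (N : ℕ) (hN : 1 ≤ N) (v : Fin N → X) (lam : Fin N → ℝ)
    (hpos : ∀ n, 0 < lam n) (hmono : Monotone lam)
    (a c : Fin N → ℝ) (Z Z' Z'' : Fin N → ℝ → ℝ)
    (hZ : ∀ n, ∀ t ∈ Set.Icc (0:ℝ) T, HasDerivWithinAt (Z n) (Z' n t) (Set.Icc 0 T) t)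
    (hZ' : ∀ n, ∀ t ∈ Set.Icc (0:ℝ) T, HasDerivWithinAt (Z' n) (Z'' n t) (Set.Icc 0 T) t)
    (hZ'' : ∀ n, ContinuousOn (Z'' n) (Set.Icc 0 T))
    (hode : ∀ n, ∀ t ∈ Set.Icc (0:ℝ) T,
      Z'' n t = -(lam n) ^ 2 * Z n t + b * Z n t + ∫ s in (0:ℝ)..t, K (t - s) * Z n s)
    (hZ0 : ∀ n, Z n 0 = a n) (hZ'0 : ∀ n, Z' n 0 = c n)
    (hsum : ∀ t ∈ Set.Icc (0:ℝ) T, ∑ n, Z n t • v n = 0) :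
    ∀ μ : ℝ, 0 < μ →
      (∀ t ∈ Set.Icc (0:ℝ) T,
        ∑ n ∈ Finset.univ.filter (fun n => lam n = μ), Z n t • v n = 0) ∧
      (∑ n ∈ Finset.univ.filter (fun n => lam n = μ), a n • v n = 0) ∧
      (∑ n ∈ Finset.univ.filter (fun n => lam n = μ), c n • v n = 0) :=
  stmt14_general T hT b K hK N v lam hpos a c Z Z' Z'' hZ hZ' hode hZ0 hZ'0 hsum
end
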